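/- Let Θ₀ < λ ≤ 1 and suppose the map (z,φ) ↦ F_{z,λ}(φ) on ℝ × B¹(ℝ⁺) attains its global minimum at (ζ, f) with f nonnegative. Then ∫₀^∞ (t−ζ) f(t)² dt = 0, and consequently ζ > 0. -/

import Mathlib

/-!
Moving the centre changes the energy by a quadratic polynomial in the shift,
`F_{ζ-s,λ}(f) = F_{ζ,λ}(f) + 2s ∫ (t-ζ) f² + s² ∫ f²`, so minimality in `z` forces the first
moment `∫ (t-ζ) f²` to vanish. Since `λ > Θ₀`, some state has Rayleigh quotient below `λ`, and a
small multiple of it has negative energy (the quartic term is finite because `φ²` has the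
integrable derivative `2φφ'`, so `B¹` functions are bounded). Hence the minimal energy is
negative, `f ≠ 0`, and `ζ = ∫ t f² / ∫ f² > 0`.
-/

open MeasureTheory Set Real Filter

noncomputable section

/-- Membership in the space `B¹(ℝ⁺)`: square integrable on `(0,∞)`, with square
integrable derivative and such that `t ↦ t·φ(t)` is square integrable. -/
def MemB1 (φ : ℝ → ℝ) : Prop :=
  ContinuousWithinAt φ (Ici 0) 0 ∧
  (∀ t ∈ Ioi (0:ℝ), DifferentiableAt ℝ φ t) ∧
  IntegrableOn (fun t => (φ t) ^ 2) (Ioi 0) ∧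
  IntegrableOn (fun t => (deriv φ t) ^ 2) (Ioi 0) ∧
  IntegrableOn (fun t => (t * φ t) ^ 2) (Ioi 0)

/-- The Rayleigh quotient of the de Gennes operator `-d²/dt² + (t-ξ)²`
(Neumann realization on `L²((0,∞))`). -/
def RQ (ξ : ℝ) (φ : ℝ → ℝ) : ℝ :=
  (∫ t in Ioi (0:ℝ), ((deriv φ t) ^ 2 + (t - ξ) ^ 2 * (φ t) ^ 2)) /
  (∫ t in Ioi (0:ℝ), (φ t) ^ 2)

/-- The ground state energy `μ₁(ξ)` of the de Gennes operator. -/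
def mu1 (ξ : ℝ) : ℝ :=
  sInf {r | ∃ φ, MemB1 φ ∧ (0 < ∫ t in Ioi (0:ℝ), (φ t) ^ 2) ∧ r = RQ ξ φ}

/-- `Θ₀ = inf_ξ μ₁(ξ)`. -/
def Theta0 : ℝ := sInf (Set.range mu1)

/-- The Ginzburg–Landau type functional `F_{z,λ}`. -/
def GLF (z lam : ℝ) (φ : ℝ → ℝ) : ℝ :=
  ∫ t in Ioi (0:ℝ),
    ((deriv φ t) ^ 2 + (t - z) ^ 2 * (φ t) ^ 2 + lam / 2 * (φ t) ^ 4 - lam * (φ t) ^ 2)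

/-- `f` minimizes `F_{z,λ}` over `B¹(ℝ⁺)`. -/
def IsMinimizer (z lam : ℝ) (f : ℝ → ℝ) : Prop :=
  MemB1 f ∧ ∀ φ, MemB1 φ → GLF z lam f ≤ GLF z lam φ

/-- `(ζ, f)` is a global minimum of the map `(z, φ) ↦ F_{z,λ}(φ)` on `ℝ × B¹(ℝ⁺)`. -/
def IsGlobalMin (lam ζ : ℝ) (f : ℝ → ℝ) : Prop :=
  MemB1 f ∧ ∀ z : ℝ, ∀ φ, MemB1 φ → GLF ζ lam f ≤ GLF z lam φ

theorem integrable_mul_of_integrable_sq {α : Type*} [MeasurableSpace α] {μ : Measure α}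
    {f g : α → ℝ} (hf : AEStronglyMeasurable f μ) (hg : AEStronglyMeasurable g μ)
    (hf2 : Integrable (fun x => f x ^ 2) μ) (hg2 : Integrable (fun x => g x ^ 2) μ) :
    Integrable (fun x => f x * g x) μ :=
  (hf2.add hg2).mono' (hf.mul hg) (ae_of_all _ fun x => by
    rw [Pi.add_apply, norm_mul, Real.norm_eq_abs, Real.norm_eq_abs]
    nlinarith [sq_abs (f x), sq_abs (g x), sq_nonneg (|f x| - |g x|)])

theorem exists_sq_mul_add_pow_four_mul_neg {a b : ℝ} (ha : a < 0) (hb : 0 ≤ b) :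
    ∃ c : ℝ, c ^ 2 * a + c ^ 4 * b < 0 := by
  have hm : 0 < -a / (b + 1) := div_pos (neg_pos.2 ha) (by linarith)
  refine ⟨√(-a / (b + 1)), ?_⟩
  rw [show (4 : ℕ) = 2 * 2 from rfl, pow_mul, sq_sqrt hm.le]
  have hmb : -a / (b + 1) * b < -a := by
    rw [div_mul_eq_mul_div, div_lt_iff₀ (by linarith)]
    nlinarith
  nlinarith

theorem memB1_of_contDiff_of_hasCompactSupport {φ : ℝ → ℝ} (hφ : ContDiff ℝ 1 φ)
    (hc : HasCompactSupport φ) : MemB1 φ := by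
  have hsq : ∀ g : ℝ → ℝ, Continuous g → HasCompactSupport g →
      IntegrableOn (fun t => g t ^ 2) (Ioi 0) := fun g hg hgc =>
    (((hg.mul hg).integrable_of_hasCompactSupport hgc.mul_right).congr
      (ae_of_all _ fun t => (sq (g t)).symm)).integrableOn
  exact ⟨hφ.continuous.continuousWithinAt,
    fun t _ => (hφ.differentiable one_ne_zero).differentiableAt,
    hsq _ hφ.continuous hc, hsq _ (hφ.continuous_deriv le_rfl) hc.deriv,
    hsq _ (continuous_id.mul hφ.continuous) hc.mul_left⟩

theorem exists_memB1_integral_sq_pos : ∃ φ, MemB1 φ ∧ 0 < ∫ t in Ioi (0:ℝ), φ t ^ 2 := by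
  let b : ContDiffBump (0 : ℝ) := default
  have hb : MemB1 b := memB1_of_contDiff_of_hasCompactSupport b.contDiff b.hasCompactSupport
  refine ⟨b, hb, ?_⟩
  rw [setIntegral_pos_iff_support_of_nonneg_ae (ae_of_all _ fun t => sq_nonneg _) hb.2.2.1]
  have hsupp : Ioo 0 b.rOut ⊆ Function.support (fun t => b t ^ 2) ∩ Ioi 0 := fun t ht =>
    ⟨pow_ne_zero 2 (b.pos_of_mem_ball (by simpa [abs_of_pos ht.1] using ht.2)).ne', ht.1⟩
  exact (by simpa using b.rOut_pos : 0 < volume (Ioo 0 b.rOut)).trans_le (measure_mono hsupp)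

namespace MemB1

variable {φ : ℝ → ℝ}

theorem continuousOn (h : MemB1 φ) : ContinuousOn φ (Ioi 0) :=
  fun t ht => (h.2.1 t ht).continuousAt.continuousWithinAt

theorem aestronglyMeasurable (h : MemB1 φ) :
    AEStronglyMeasurable φ (volume.restrict (Ioi 0)) :=
  h.continuousOn.aestronglyMeasurable measurableSet_Ioi

theorem const_mul (h : MemB1 φ) (c : ℝ) : MemB1 (fun t => c * φ t) := by
  obtain ⟨hc, hd, hsq, hd2, ht2⟩ := h
  refine ⟨continuousWithinAt_const.mul hc, fun t ht => (hd t ht).const_mul c, ?_, ?_, ?_⟩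
  · exact (hsq.const_mul (c ^ 2)).congr (ae_of_all _ fun t => by ring)
  · refine IntegrableOn.congr_fun (hd2.const_mul (c ^ 2) : IntegrableOn _ _ _)
      (fun t ht => ?_) measurableSet_Ioi
    rw [deriv_const_mul c (hd t ht)]
    ring
  · exact (ht2.const_mul (c ^ 2)).congr (ae_of_all _ fun t => by ring)

theorem integrableOn_mul_sq (h : MemB1 φ) : IntegrableOn (fun t => t * φ t ^ 2) (Ioi 0) := by
  have hm : AEStronglyMeasurable (fun t => t * φ t) (volume.restrict (Ioi 0)) :=
    (continuousOn_id.mul h.continuousOn).aestronglyMeasurable measurableSet_Ioi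
  exact (integrable_mul_of_integrable_sq hm h.aestronglyMeasurable h.2.2.2.2 h.2.2.1).congr
    (ae_of_all _ fun t => by ring)

theorem integrableOn_sub_mul_sq (h : MemB1 φ) (z : ℝ) :
    IntegrableOn (fun t => (t - z) * φ t ^ 2) (Ioi 0) :=
  (h.integrableOn_mul_sq.sub (h.2.2.1.const_mul z)).congr (ae_of_all _ fun t => by
    simp only [Pi.sub_apply]
    ring)

theorem integral_sub_mul_sq (h : MemB1 φ) (z : ℝ) :
    ∫ t in Ioi (0:ℝ), (t - z) * φ t ^ 2 =
      (∫ t in Ioi (0:ℝ), t * φ t ^ 2) - z * ∫ t in Ioi (0:ℝ), φ t ^ 2 := by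
  rw [← integral_const_mul, ← integral_sub h.integrableOn_mul_sq (h.2.2.1.const_mul z)]
  simp_rw [sub_mul]

theorem integrableOn_sub_sq_mul_sq (h : MemB1 φ) (z : ℝ) :
    IntegrableOn (fun t => (t - z) ^ 2 * φ t ^ 2) (Ioi 0) :=
  ((h.2.2.2.2.add (h.integrableOn_mul_sq.const_mul (-2 * z))).add
    (h.2.2.1.const_mul (z ^ 2))).congr (ae_of_all _ fun t => by
      simp only [Pi.add_apply]
      ring)

theorem integrableOn_energy (h : MemB1 φ) (z : ℝ) :
    IntegrableOn (fun t => (deriv φ t) ^ 2 + (t - z) ^ 2 * (φ t) ^ 2) (Ioi 0) :=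
  h.2.2.2.1.add (h.integrableOn_sub_sq_mul_sq z)

theorem integrableOn_mul_deriv (h : MemB1 φ) :
    IntegrableOn (fun t => φ t * deriv φ t) (Ioi 0) :=
  integrable_mul_of_integrable_sq h.aestronglyMeasurable
    (measurable_deriv φ).aestronglyMeasurable h.2.2.1 h.2.2.2.1

theorem abs_sq_sub_sq_le (h : MemB1 φ) {u v : ℝ} (hu : 0 < u) (huv : u ≤ v) :
    |φ v ^ 2 - φ u ^ 2| ≤ ∫ t in Ioi (0:ℝ), |2 * (φ t * deriv φ t)| := by
  have hD : IntegrableOn (fun t => 2 * (φ t * deriv φ t)) (Ioi 0) :=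
    h.integrableOn_mul_deriv.const_mul 2
  have hFTC : ∫ t in u..v, 2 * (φ t * deriv φ t) = φ v ^ 2 - φ u ^ 2 := by
    refine intervalIntegral.integral_eq_sub_of_hasDerivAt (f := fun t => φ t ^ 2)
      (fun t ht => ?_) ?_
    · rw [uIcc_of_le huv] at ht
      refine ((h.2.1 t (hu.trans_le ht.1)).hasDerivAt.fun_pow 2).congr_deriv ?_
      norm_num
      ring
    · rw [intervalIntegrable_iff, uIoc_of_le huv]
      exact hD.mono_set fun t ht => hu.trans ht.1
  rw [← hFTC, intervalIntegral.integral_of_le huv]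
  exact abs_integral_le_integral_abs.trans (setIntegral_mono_set hD.abs
    (ae_of_all _ fun t => abs_nonneg _)
    (Ioc_subset_Ioi_self.trans (Ioi_subset_Ioi hu.le)).eventuallyLE)

theorem exists_forall_sq_le (h : MemB1 φ) : ∃ M, ∀ t ∈ Ioi (0:ℝ), φ t ^ 2 ≤ M := by
  refine ⟨φ 1 ^ 2 + ∫ t in Ioi (0:ℝ), |2 * (φ t * deriv φ t)|, fun b hb => ?_⟩
  rcases le_total 1 b with hab | hba
  · linarith [(abs_le.1 (h.abs_sq_sub_sq_le one_pos hab)).2]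
  · linarith [(abs_le.1 (h.abs_sq_sub_sq_le hb hba)).1]

theorem integrableOn_pow_four (h : MemB1 φ) : IntegrableOn (fun t => φ t ^ 4) (Ioi 0) := by
  obtain ⟨M, hM⟩ := h.exists_forall_sq_le
  refine (h.2.2.1.const_mul M).mono'
    ((h.continuousOn.pow 4).aestronglyMeasurable measurableSet_Ioi) ?_
  filter_upwards [ae_restrict_mem measurableSet_Ioi] with t ht
  rw [Real.norm_eq_abs, abs_of_nonneg (by positivity)]
  nlinarith [hM t ht, sq_nonneg (φ t)]

end MemB1

section Energy

variable {φ : ℝ → ℝ}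

theorem MemB1.integrableOn_GLF_integrand (h : MemB1 φ) (z lam : ℝ) :
    IntegrableOn (fun t => (deriv φ t) ^ 2 + (t - z) ^ 2 * (φ t) ^ 2 + lam / 2 * (φ t) ^ 4
      - lam * (φ t) ^ 2) (Ioi 0) :=
  ((h.integrableOn_energy z).add (h.integrableOn_pow_four.const_mul _)).sub
    (h.2.2.1.const_mul _)

theorem GLF_sub (h : MemB1 φ) (z s lam : ℝ) :
    GLF (z - s) lam φ = GLF z lam φ + 2 * s * (∫ t in Ioi (0:ℝ), (t - z) * φ t ^ 2)
      + s ^ 2 * ∫ t in Ioi (0:ℝ), φ t ^ 2 := by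
  have hdiff : GLF (z - s) lam φ - GLF z lam φ =
      ∫ t in Ioi (0:ℝ), 2 * s * ((t - z) * φ t ^ 2) + s ^ 2 * φ t ^ 2 := by
    rw [GLF, GLF, ← integral_sub (h.integrableOn_GLF_integrand _ _)
      (h.integrableOn_GLF_integrand _ _)]
    congr 1 with t
    ring
  rw [integral_add ((h.integrableOn_sub_mul_sq z).const_mul _) (h.2.2.1.const_mul _),
    integral_const_mul, integral_const_mul] at hdiff
  linarith

theorem GLF_const_mul (h : MemB1 φ) (c z lam : ℝ) :
    GLF z lam (fun t => c * φ t) =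
      c ^ 2 * (∫ t in Ioi (0:ℝ), ((deriv φ t) ^ 2 + (t - z) ^ 2 * (φ t) ^ 2))
        + c ^ 4 * (lam / 2 * ∫ t in Ioi (0:ℝ), φ t ^ 4)
        - c ^ 2 * (lam * ∫ t in Ioi (0:ℝ), φ t ^ 2) := by
  have h₁ := (h.integrableOn_energy z).const_mul (c ^ 2)
  have h₂ := h.integrableOn_pow_four.const_mul (c ^ 4 * (lam / 2))
  have h₁₂ : IntegrableOn (fun t => c ^ 2 * ((deriv φ t) ^ 2 + (t - z) ^ 2 * (φ t) ^ 2)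
      + c ^ 4 * (lam / 2) * φ t ^ 4) (Ioi 0) := h₁.add h₂
  rw [GLF, setIntegral_congr_fun measurableSet_Ioi (g := fun t =>
      c ^ 2 * ((deriv φ t) ^ 2 + (t - z) ^ 2 * (φ t) ^ 2) + c ^ 4 * (lam / 2) * φ t ^ 4
        - c ^ 2 * lam * φ t ^ 2) fun t ht => ?_]
  · rw [integral_sub h₁₂ (h.2.2.1.const_mul _), integral_add h₁ h₂, integral_const_mul,
      integral_const_mul, integral_const_mul]
    ring
  · simp only [deriv_const_mul c (h.2.1 t ht)]
    ring

end Energy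

theorem Theta0_nonneg : 0 ≤ Theta0 :=
  Real.sInf_nonneg <| forall_mem_range.2 fun _ => Real.sInf_nonneg <| by
    rintro _ ⟨φ, -, hN, rfl⟩
    exact div_nonneg (setIntegral_nonneg measurableSet_Ioi fun t _ => by positivity) hN.le

theorem exists_GLF_neg {lam : ℝ} (hlam : Theta0 < lam) :
    ∃ z ψ, MemB1 ψ ∧ GLF z lam ψ < 0 := by
  obtain ⟨ξ, hξ⟩ : ∃ ξ, mu1 ξ < lam := by
    by_contra! h
    exact hlam.not_ge (le_csInf (range_nonempty mu1) (forall_mem_range.2 h))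
  obtain ⟨φ₀, hφ₀, hN₀⟩ := exists_memB1_integral_sq_pos
  obtain ⟨_, ⟨φ, hφ, hN, rfl⟩, hlt⟩ := exists_lt_of_csInf_lt (s := {r | ∃ φ, MemB1 φ ∧
    (0 < ∫ t in Ioi (0:ℝ), (φ t) ^ 2) ∧ r = RQ ξ φ}) ⟨_, φ₀, hφ₀, hN₀, rfl⟩ hξ
  rw [RQ, div_lt_iff₀ hN] at hlt
  have hP : 0 ≤ lam / 2 * ∫ t in Ioi (0:ℝ), φ t ^ 4 :=
    mul_nonneg (by linarith [Theta0_nonneg])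
      (setIntegral_nonneg measurableSet_Ioi fun t _ => by positivity)
  obtain ⟨c, hc⟩ := exists_sq_mul_add_pow_four_mul_neg (sub_neg.2 hlt) hP
  exact ⟨ξ, _, hφ.const_mul c, by rw [GLF_const_mul hφ]; linarith⟩

theorem integral_sq_pos_of_GLF_neg {f : ℝ → ℝ} {z lam : ℝ}
    (hf : IntegrableOn (fun t => f t ^ 2) (Ioi 0)) (hneg : GLF z lam f < 0) :
    0 < ∫ t in Ioi (0:ℝ), f t ^ 2 := by
  refine (setIntegral_nonneg measurableSet_Ioi fun t _ => sq_nonneg (f t)).lt_of_ne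
    fun h0 => hneg.not_ge ?_
  have hzero := (integral_eq_zero_iff_of_nonneg (fun t => sq_nonneg (f t)) hf).1 h0.symm
  refine integral_nonneg_of_ae ?_
  filter_upwards [hzero] with t ht
  rw [Pi.zero_apply, pow_eq_zero_iff two_ne_zero |>.1 ht]
  linarith [sq_nonneg (deriv f t)]

theorem integral_mul_sq_pos {f : ℝ → ℝ} (hf : IntegrableOn (fun t => f t ^ 2) (Ioi 0))
    (hf' : IntegrableOn (fun t => t * f t ^ 2) (Ioi 0)) (hN : 0 < ∫ t in Ioi (0:ℝ), f t ^ 2) :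
    0 < ∫ t in Ioi (0:ℝ), t * f t ^ 2 := by
  have hsupp : Function.support (fun t => t * f t ^ 2) ∩ Ioi 0 =
      Function.support (fun t => f t ^ 2) ∩ Ioi 0 := by
    ext t
    simp only [mem_inter_iff, Function.mem_support, mem_Ioi, mul_ne_zero_iff]
    exact ⟨fun h => ⟨h.1.2, h.2⟩, fun h => ⟨⟨h.2.ne', h.1⟩, h.2⟩⟩
  rw [setIntegral_pos_iff_support_of_nonneg_ae (ae_of_all _ fun t => sq_nonneg _) hf] at hN
  rwa [setIntegral_pos_iff_support_of_nonneg_ae (ae_restrict_of_forall_mem measurableSet_Ioi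
    fun t ht => mul_nonneg (le_of_lt ht) (sq_nonneg _)) hf', hsupp]

theorem moment_eq_zero_of_forall_GLF_le {f : ℝ → ℝ} {ζ lam : ℝ} (hf : MemB1 f)
    (hmin : ∀ z, GLF ζ lam f ≤ GLF z lam f) : ∫ t in Ioi (0:ℝ), (t - ζ) * f t ^ 2 = 0 := by
  set m := ∫ t in Ioi (0:ℝ), (t - ζ) * f t ^ 2
  have hquad : ∀ s, 0 ≤ (∫ t in Ioi (0:ℝ), f t ^ 2) * (s * s) + 2 * m * s + 0 := fun s => by
    have := hmin (ζ - s)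
    rw [GLF_sub hf] at this
    linarith
  have := discrim_le_zero hquad
  rw [discrim] at this
  nlinarith [sq_nonneg m]

theorem moment_identity_general (lam ζ : ℝ) (f : ℝ → ℝ)
    (hlam0 : Theta0 < lam)
    (hmin : IsGlobalMin lam ζ f) :
    (∫ t in Ioi (0:ℝ), (t - ζ) * (f t) ^ 2) = 0 ∧ 0 < ζ := by
  obtain ⟨hf, hle⟩ := hmin
  have hmoment := moment_eq_zero_of_forall_GLF_le hf fun z => hle z f hf
  obtain ⟨z, ψ, hψ, hneg⟩ := exists_GLF_neg hlam0
  have hN := integral_sq_pos_of_GLF_neg hf.2.2.1 ((hle z ψ hψ).trans_lt hneg)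
  have hB := integral_mul_sq_pos hf.2.2.1 hf.integrableOn_mul_sq hN
  refine ⟨hmoment, ?_⟩
  rw [hf.integral_sub_mul_sq] at hmoment
  nlinarith

/-- at a global minimum `(ζ, f)` of `(z,φ) ↦ F_{z,λ}(φ)` with
`Θ₀ < λ ≤ 1`, the moment identity `∫ (t-ζ) f² = 0` holds and `ζ > 0`. -/
theorem moment_identity (lam ζ : ℝ) (f : ℝ → ℝ)
    (hlam0 : Theta0 < lam) (hlam1 : lam ≤ 1)
    (hmin : IsGlobalMin lam ζ f) (hfpos : ∀ t : ℝ, 0 ≤ t → 0 ≤ f t) :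
    (∫ t in Ioi (0:ℝ), (t - ζ) * (f t) ^ 2) = 0 ∧ 0 < ζ :=
  moment_identity_general lam ζ f hlam0 hmin
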